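/- A 2×2 complex unitary matrix U is skew-symmetric (Uᵀ = -U) if and only if there exists z ∈ ℂ with |z| = 1 such that U = z · !![0, -1; 1, 0], i.e., U is a unit-modulus scalar multiple of the Pauli-type gate XZ. Equivalently, combining with the skew-symmetry criterion: U satisfies ⟨ψ, Uψ⟩ = 0 for every real unit vector ψ ∈ ℂ² if and only if U = z · !![0, -1; 1, 0] for some z with |z| = 1. -/

import Mathlib

/-!
Skew-symmetry of a `2 × 2` matrix forces a zero diagonal and `U 0 1 = -U 1 0`, so `U = c • XZ`
with `c = U 1 0`, and unitarity of `c • XZ` means `|c| = 1`.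

For a real vector `ψ`, `⟨ψ, Uψ⟩ = ψᵀ U ψ` is the quadratic form of `U`. It vanishes when
`Uᵀ = -U` because `ψᵀ U ψ = ψᵀ Uᵀ ψ`. Conversely, evaluating it on the real unit vectors `eᵢ` and
`(3/5) eᵢ + (4/5) eⱼ` recovers `U i i` and `U i j + U j i`, so these all vanish.
-/

open Matrix

/-- The Pauli-type gate `XZ = !![0, -1; 1, 0]`. -/
def PXZ : Matrix (Fin 2) (Fin 2) ℂ := !![0, -1; 1, 0]

theorem Matrix.dotProduct_mulVec_self_eq_zero_of_transpose_eq_neg {n R : Type*} [Fintype n]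
    [CommRing R] [NoZeroDivisors R] [CharZero R] {U : Matrix n n R} (hU : Uᵀ = -U)
    (v : n → R) : v ⬝ᵥ U *ᵥ v = 0 := by
  refine CharZero.eq_neg_self_iff.mp ?_
  calc v ⬝ᵥ U *ᵥ v = v ᵥ* Uᵀ ⬝ᵥ v := by rw [vecMul_transpose, dotProduct_comm]
    _ = -(v ⬝ᵥ U *ᵥ v) := by rw [← dotProduct_mulVec, hU, neg_mulVec, dotProduct_neg]

theorem star_eq_self_of_forall_im_eq_zero {n : Type*} {ψ : n → ℂ} (hψ : ∀ i, (ψ i).im = 0) :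
    star ψ = ψ :=
  funext fun i => Complex.conj_eq_iff_im.mpr (hψ i)

section RealUnitVectors

variable {n : Type*} [Fintype n] [DecidableEq n] {U : Matrix n n ℂ}
  (hU : ∀ ψ : n → ℂ, (∀ i, (ψ i).im = 0) → star ψ ⬝ᵥ ψ = 1 → star ψ ⬝ᵥ (U *ᵥ ψ) = 0)
include hU

theorem diag_eq_zero_of_forall_real_unit (i : n) : U i i = 0 := by
  have hreal (k : n) : ((Pi.single i 1 : n → ℂ) k).im = 0 := by
    rcases eq_or_ne k i with rfl | hk <;> simp [*]
  simpa [star_eq_self_of_forall_im_eq_zero hreal] using hU _ hreal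

theorem add_apply_swap_eq_zero_of_forall_real_unit {i j : n} (hij : i ≠ j) :
    U i j + U j i = 0 := by
  set ψ : n → ℂ := (3 / 5 : ℂ) • Pi.single i 1 + (4 / 5 : ℂ) • Pi.single j 1
  have hreal (k : n) : (ψ k).im = 0 := by
    rcases eq_or_ne k i with rfl | hki <;> rcases eq_or_ne k j with rfl | hkj <;> simp [ψ, *]
  have hψ := hU ψ hreal
  rw [star_eq_self_of_forall_im_eq_zero hreal] at hψ
  simp only [ψ, mulVec_add, mulVec_smul, mulVec_single_one, add_dotProduct, dotProduct_add,
    smul_dotProduct, dotProduct_smul, single_one_dotProduct, Pi.single_eq_same,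
    Pi.single_eq_of_ne hij, Pi.single_eq_of_ne hij.symm, col_apply,
    diag_eq_zero_of_forall_real_unit hU, smul_eq_mul] at hψ
  linear_combination (25 / 12 : ℂ) * hψ (by norm_num)

theorem transpose_eq_neg_of_forall_real_unit : Uᵀ = -U := by
  ext i j
  rcases eq_or_ne j i with rfl | hji
  · simp [diag_eq_zero_of_forall_real_unit hU]
  · simpa [eq_neg_iff_add_eq_zero] using add_apply_swap_eq_zero_of_forall_real_unit hU hji

end RealUnitVectors

theorem transpose_eq_neg_iff_exists_eq_smul_PXZ (U : Matrix (Fin 2) (Fin 2) ℂ) :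
    Uᵀ = -U ↔ ∃ c : ℂ, U = c • PXZ := by
  constructor
  · intro h
    have hdiag (i : Fin 2) : U i i = 0 := CharZero.eq_neg_self_iff.mp (congr_fun₂ h i i)
    have h01 : U 0 1 = -U 1 0 := congr_fun₂ h 1 0
    refine ⟨U 1 0, ?_⟩
    ext i j
    fin_cases i <;> fin_cases j <;> simp [PXZ, hdiag, h01]
  · rintro ⟨c, rfl⟩
    ext i j
    fin_cases i <;> fin_cases j <;> simp [PXZ]

theorem norm_eq_one_of_smul_PXZ_mem_unitaryGroup {z : ℂ}
    (h : z • PXZ ∈ unitaryGroup (Fin 2) ℂ) : ‖z‖ = 1 := by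
  have hnorm_sq : (‖z‖ : ℂ) ^ 2 = 1 := by
    simpa [PXZ, mul_apply, Fin.sum_univ_two, Complex.conj_mul'] using
      congr_fun₂ (mem_unitaryGroup_iff'.mp h) 0 0
  exact (pow_eq_one_iff_of_nonneg (norm_nonneg z) two_ne_zero).mp (mod_cast hnorm_sq)

/-- A `2×2` unitary `U` is skew-symmetric iff it is a unit-modulus scalar multiple of the
Pauli-type gate `XZ = !![0, -1; 1, 0]`; equivalently, `⟨ψ, Uψ⟩ = 0` for every real unit
vector `ψ ∈ ℂ²` iff `U = z • XZ` for some `z` with `|z| = 1`. -/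
theorem stmt8 (U : Matrix (Fin 2) (Fin 2) ℂ) (hU : U ∈ Matrix.unitaryGroup (Fin 2) ℂ) :
    ((Uᵀ = -U) ↔ ∃ z : ℂ, ‖z‖ = 1 ∧ U = z • PXZ) ∧
    ((∀ ψ : Fin 2 → ℂ, (∀ i, (ψ i).im = 0) → star ψ ⬝ᵥ ψ = 1 → star ψ ⬝ᵥ (U *ᵥ ψ) = 0) ↔
      ∃ z : ℂ, ‖z‖ = 1 ∧ U = z • PXZ) := by
  have skew_iff : Uᵀ = -U ↔ ∃ z : ℂ, ‖z‖ = 1 ∧ U = z • PXZ := by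
    rw [transpose_eq_neg_iff_exists_eq_smul_PXZ]
    exact ⟨fun ⟨c, hc⟩ => ⟨c, norm_eq_one_of_smul_PXZ_mem_unitaryGroup (hc ▸ hU), hc⟩,
      fun ⟨z, _, hz⟩ => ⟨z, hz⟩⟩
  refine ⟨skew_iff, ?_⟩
  rw [← skew_iff]
  refine ⟨transpose_eq_neg_of_forall_real_unit, fun hskew ψ hψ _ => ?_⟩
  rw [star_eq_self_of_forall_im_eq_zero hψ]
  exact dotProduct_mulVec_self_eq_zero_of_transpose_eq_neg hskew ψ
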